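/- For every integer p ≥ 1, the function f_p(x) = (2^{p-1}√(2π))⁻¹ ∫_{‖x‖_∞}^∞ y^{2-p} e^{-y²/2} dy is a probability density on ℝ^p: it is nonnegative and integrates to 1. -/
import Mathlib


open MeasureTheory

/-- The Khintchine mixture density in `p` dimensions; `‖x‖` on `Fin p → ℝ` is the sup norm. -/
noncomputable def khintchineDensity (p : ℕ) (x : Fin p → ℝ) : ℝ :=
  ((2 : ℝ) ^ ((p : ℝ) - 1) * Real.sqrt (2 * Real.pi))⁻¹ *
    ∫ y in Set.Ioi ‖x‖, y ^ ((2 : ℝ) - (p : ℝ)) * Real.exp (-y ^ 2 / 2)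

open Real Set in
private lemma khAux_meas (p : ℕ) :
    Measurable (fun y : ℝ => y ^ ((2:ℝ) - (p:ℝ)) * Real.exp (-y ^ 2 / 2)) := by
  fun_prop

open Real Set in
private lemma khAux_moment :
    ∫ y in Ioi (0:ℝ), y ^ ((2:ℝ)) * Real.exp (-y^2/2) = Real.sqrt (2*π)/2 := by
  have h := integral_rpow_mul_exp_neg_mul_rpow (p := 2) (q := 2) (b := 1/2)
    two_pos (by norm_num) (by norm_num)
  have hcong : ∀ y ∈ Ioi (0:ℝ), y ^ ((2:ℝ)) * Real.exp (-(1/2) * y ^ (2:ℝ))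
      = y ^ ((2:ℝ)) * Real.exp (-y^2/2) := by
    intro y hy
    rw [show ((2:ℝ)) = ((2:ℕ):ℝ) by norm_num, Real.rpow_natCast]
    ring_nf
  rw [setIntegral_congr_fun measurableSet_Ioi hcong] at h
  rw [h]
  have hG : Real.Gamma (((2:ℝ)+1)/2) = Real.sqrt π / 2 := by
    rw [show (((2:ℝ)+1)/2) = 1/2 + 1 by norm_num, Real.Gamma_add_one (by norm_num),
      Real.Gamma_one_half_eq]
    ring
  have hpow : ((1/2:ℝ)) ^ (-((2:ℝ)+1)/2) = 2 * Real.sqrt 2 := by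
    rw [show ((1/2:ℝ)) = 2⁻¹ by norm_num, Real.inv_rpow (by norm_num), ← Real.rpow_neg (by norm_num)]
    rw [show (-(-((2:ℝ)+1)/2)) = 1 + 1/2 by norm_num, Real.rpow_add two_pos, Real.rpow_one,
      ← Real.sqrt_eq_rpow]
  rw [hG, hpow, Real.sqrt_mul (by norm_num : (0:ℝ) ≤ 2)]
  ring

open Real Set in
private lemma khAux_intOn (p : ℕ) (hp : 1 ≤ p) {r : ℝ} (hr : 0 < r) :
    IntegrableOn (fun y : ℝ => y ^ ((2:ℝ) - (p:ℝ)) * Real.exp (-y ^ 2 / 2)) (Ioi r) := by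
  have h2 : (0:ℝ) < 1/2 := by norm_num
  have hint : IntegrableOn (fun y : ℝ =>
      (1 + r ^ ((2:ℝ) - (p:ℝ))) * Real.exp (-(1/2) * y ^ 2)
        + y ^ (2:ℝ) * Real.exp (-(1/2) * y ^ 2)) (Ioi r) := by
    apply Integrable.add
    · exact ((integrable_exp_neg_mul_sq h2).const_mul _).integrableOn
    · exact (integrableOn_rpow_mul_exp_neg_mul_sq h2 (by norm_num)).mono_set
        (Ioi_subset_Ioi hr.le)
  refine hint.mono' ((khAux_meas p).aestronglyMeasurable) ?_
  filter_upwards [ae_restrict_mem measurableSet_Ioi] with y hy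
  have hy0 : 0 < y := hr.trans hy
  have hnn : 0 ≤ y ^ ((2:ℝ) - (p:ℝ)) * Real.exp (-y ^ 2 / 2) :=
    mul_nonneg (rpow_nonneg hy0.le _) (exp_pos _).le
  rw [Real.norm_eq_abs, abs_of_nonneg hnn]
  have hexp : Real.exp (-y ^ 2 / 2) = Real.exp (-(1/2) * y ^ 2) := by ring_nf
  have hb : y ^ ((2:ℝ) - (p:ℝ)) ≤ 1 + r ^ ((2:ℝ) - (p:ℝ)) + y ^ (2:ℝ) := by
    have hy2 : (0:ℝ) ≤ y ^ (2:ℝ) := rpow_nonneg hy0.le _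
    have hr2 : (0:ℝ) ≤ r ^ ((2:ℝ) - (p:ℝ)) := rpow_nonneg hr.le _
    rcases Nat.lt_or_ge p 2 with hplt | hpge
    · -- p = 1
      interval_cases p
      have h1 : ((2:ℝ) - (1:ℕ)) = 1 := by norm_num
      have h2' : y ^ (2:ℝ) = y ^ 2 := by
        rw [show ((2:ℝ)) = ((2:ℕ):ℝ) by norm_num, Real.rpow_natCast]
      rw [h1, Real.rpow_one, Real.rpow_one, h2']
      nlinarith [sq_nonneg (y - 1), hr.le]
    · have hle : ((2:ℝ) - (p:ℝ)) ≤ 0 := by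
        have : (2:ℝ) ≤ (p:ℝ) := by exact_mod_cast hpge
        linarith
      have := rpow_le_rpow_of_nonpos hr hy.le hle
      linarith
  calc y ^ ((2:ℝ) - (p:ℝ)) * Real.exp (-y ^ 2 / 2)
      ≤ (1 + r ^ ((2:ℝ) - (p:ℝ)) + y ^ (2:ℝ)) * Real.exp (-y ^ 2 / 2) :=
        mul_le_mul_of_nonneg_right hb (exp_pos _).le
    _ = (1 + r ^ ((2:ℝ) - (p:ℝ))) * Real.exp (-(1/2) * y ^ 2)
        + y ^ (2:ℝ) * Real.exp (-(1/2) * y ^ 2) := by rw [← hexp]; ring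

open Real Set in
private lemma khAux_lintegral (p : ℕ) (hp : 1 ≤ p) :
    (∫⁻ x : Fin p → ℝ, ∫⁻ y in Ioi ‖x‖,
        ENNReal.ofReal (y ^ ((2:ℝ) - (p:ℝ)) * Real.exp (-y ^ 2 / 2))) =
      ENNReal.ofReal ((2:ℝ) ^ ((p:ℝ) - 1) * Real.sqrt (2 * π)) := by
  set H : ℝ → ENNReal := fun y => ENNReal.ofReal (y ^ ((2:ℝ) - (p:ℝ)) * Real.exp (-y ^ 2 / 2))
    with hHdef
  have hHm : Measurable H := (khAux_meas p).ennreal_ofReal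
  have hS : MeasurableSet {q : (Fin p → ℝ) × ℝ | ‖q.1‖ < q.2} :=
    measurableSet_lt measurable_fst.norm measurable_snd
  calc (∫⁻ x : Fin p → ℝ, ∫⁻ y in Ioi ‖x‖, H y)
      = ∫⁻ x : Fin p → ℝ, ∫⁻ y, (Ioi ‖x‖).indicator H y := by
        refine lintegral_congr fun x => ?_
        exact (lintegral_indicator measurableSet_Ioi H).symm
    _ = ∫⁻ y : ℝ, ∫⁻ x : Fin p → ℝ, (Ioi ‖x‖).indicator H y := by
        apply lintegral_lintegral_swap
        have huncurry : (Function.uncurry fun (x : Fin p → ℝ) (y : ℝ) => (Ioi ‖x‖).indicator H y)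
            = {q : (Fin p → ℝ) × ℝ | ‖q.1‖ < q.2}.indicator (fun q => H q.2) := by
          funext q
          by_cases h : ‖q.1‖ < q.2 <;>
            simp [Function.uncurry, Set.indicator_apply, mem_Ioi, h]
        rw [huncurry]
        exact ((hHm.comp measurable_snd).indicator hS).aemeasurable
    _ = ∫⁻ y : ℝ, H y * volume (Metric.ball (0 : Fin p → ℝ) y) := by
        refine lintegral_congr fun y => ?_
        have hind : ∀ x : Fin p → ℝ, (Ioi ‖x‖).indicator H y
            = (Metric.ball (0 : Fin p → ℝ) y).indicator (fun _ => H y) x := by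
          intro x
          by_cases h : ‖x‖ < y <;>
            simp [Set.indicator_apply, mem_Ioi, mem_ball_zero_iff, h]
        simp_rw [hind]
        rw [lintegral_indicator measurableSet_ball, setLIntegral_const]
    _ = ∫⁻ y : ℝ, (Ioi (0:ℝ)).indicator
          (fun y => ENNReal.ofReal ((2:ℝ)^p * (y ^ (2:ℝ) * Real.exp (-y^2/2)))) y := by
        refine lintegral_congr fun y => ?_
        rcases le_or_gt y 0 with h | h
        · rw [Metric.ball_eq_empty.2 h, Set.indicator_of_notMem (by simpa using h)]
          simp
        · rw [Real.volume_pi_ball _ h, Set.indicator_of_mem (mem_Ioi.2 h), hHdef]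
          rw [← ENNReal.ofReal_mul (mul_nonneg (rpow_nonneg h.le _) (exp_pos _).le)]
          congr 1
          rw [Fintype.card_fin, mul_pow]
          have hpow : y ^ ((2:ℝ) - (p:ℝ)) * (y:ℝ) ^ p = y ^ (2:ℝ) := by
            rw [← Real.rpow_natCast y p, ← Real.rpow_add h]
            norm_num
          calc y ^ ((2:ℝ) - (p:ℝ)) * Real.exp (-y ^ 2 / 2) * ((2:ℝ)^p * y ^ p)
              = (2:ℝ)^p * ((y ^ ((2:ℝ) - (p:ℝ)) * (y:ℝ) ^ p) * Real.exp (-y^2/2)) := by ring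
            _ = (2:ℝ)^p * (y ^ (2:ℝ) * Real.exp (-y^2/2)) := by rw [hpow]
    _ = ∫⁻ y in Ioi (0:ℝ), ENNReal.ofReal ((2:ℝ)^p * (y ^ (2:ℝ) * Real.exp (-y^2/2))) :=
        lintegral_indicator measurableSet_Ioi _
    _ = ENNReal.ofReal (∫ y in Ioi (0:ℝ), (2:ℝ)^p * (y ^ (2:ℝ) * Real.exp (-y^2/2))) := by
        refine (ofReal_integral_eq_lintegral_ofReal ?_ ?_).symm
        · apply Integrable.const_mul
          have hI := integrableOn_rpow_mul_exp_neg_mul_sq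
            (by norm_num : (0:ℝ) < 1/2) (by norm_num : (-1:ℝ) < 2)
          refine hI.congr_fun (fun y _ => ?_) measurableSet_Ioi
          ring_nf
        · filter_upwards [ae_restrict_mem measurableSet_Ioi] with y hy
          exact mul_nonneg (by positivity)
            (mul_nonneg (rpow_nonneg (le_of_lt hy) _) (exp_pos _).le)
    _ = ENNReal.ofReal ((2:ℝ) ^ ((p:ℝ) - 1) * Real.sqrt (2 * π)) := by
        rw [integral_const_mul, khAux_moment]
        congr 1
        rw [Real.rpow_sub two_pos, Real.rpow_one, Real.rpow_natCast]
        ring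

open Real Set in
theorem khintchine_density_is_density (p : ℕ) (hp : 1 ≤ p) :
    (∀ x : Fin p → ℝ, 0 ≤ khintchineDensity p x) ∧
    (∫ x : Fin p → ℝ, khintchineDensity p x) = 1 := by
  have hgm := khAux_meas p
  have hcpos : (0:ℝ) < (2:ℝ) ^ ((p:ℝ) - 1) * Real.sqrt (2 * π) :=
    mul_pos (Real.rpow_pos_of_pos two_pos _) (Real.sqrt_pos.2 (by positivity))
  have hFnn : ∀ x : Fin p → ℝ,
      0 ≤ ∫ y in Ioi ‖x‖, y ^ ((2:ℝ) - (p:ℝ)) * Real.exp (-y ^ 2 / 2) := by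
    intro x
    refine setIntegral_nonneg measurableSet_Ioi fun y hy => ?_
    exact mul_nonneg (Real.rpow_nonneg ((norm_nonneg x).trans hy.le) _) (Real.exp_pos _).le
  constructor
  · intro x
    exact mul_nonneg (inv_nonneg.2 hcpos.le) (hFnn x)
  simp only [khintchineDensity]
  rw [integral_const_mul]
  have hmeasF : AEStronglyMeasurable
      (fun x : Fin p → ℝ => ∫ y in Ioi ‖x‖, y ^ ((2:ℝ) - (p:ℝ)) * Real.exp (-y ^ 2 / 2))
      volume := by
    have hsm : StronglyMeasurable fun q : (Fin p → ℝ) × ℝ =>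
        ({q : (Fin p → ℝ) × ℝ | ‖q.1‖ < q.2}.indicator
          (fun q => q.2 ^ ((2:ℝ) - (p:ℝ)) * Real.exp (-q.2 ^ 2 / 2))) q :=
      ((hgm.comp measurable_snd).indicator
        (measurableSet_lt measurable_fst.norm measurable_snd)).stronglyMeasurable
    have heq : (fun x : Fin p → ℝ =>
        ∫ y in Ioi ‖x‖, y ^ ((2:ℝ) - (p:ℝ)) * Real.exp (-y ^ 2 / 2))
        = fun x => ∫ y : ℝ, ({q : (Fin p → ℝ) × ℝ | ‖q.1‖ < q.2}.indicator
            (fun q => q.2 ^ ((2:ℝ) - (p:ℝ)) * Real.exp (-q.2 ^ 2 / 2))) (x, y) := by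
      funext x
      rw [← integral_indicator measurableSet_Ioi]
      congr 1
    rw [heq]
    exact hsm.integral_prod_right'.aestronglyMeasurable
  rw [integral_eq_lintegral_of_nonneg_ae (Filter.Eventually.of_forall hFnn) hmeasF]
  have hnorm_pos : ∀ᵐ x : Fin p → ℝ, 0 < ‖x‖ := by
    have hset : {x : Fin p → ℝ | ¬ 0 < ‖x‖} = Metric.closedBall 0 0 := by
      ext x
      simp [Metric.mem_closedBall, dist_zero_right, not_lt]
    rw [ae_iff, hset, Real.volume_pi_closedBall 0 le_rfl]
    simp [zero_pow (Nat.one_le_iff_ne_zero.mp hp)]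
  have hcong : ∀ᵐ x : Fin p → ℝ,
      ENNReal.ofReal (∫ y in Ioi ‖x‖, y ^ ((2:ℝ) - (p:ℝ)) * Real.exp (-y ^ 2 / 2))
        = ∫⁻ y in Ioi ‖x‖, ENNReal.ofReal (y ^ ((2:ℝ) - (p:ℝ)) * Real.exp (-y ^ 2 / 2)) := by
    filter_upwards [hnorm_pos] with x hx
    refine ofReal_integral_eq_lintegral_ofReal (khAux_intOn p hp hx) ?_
    filter_upwards [ae_restrict_mem measurableSet_Ioi] with y hy
    exact mul_nonneg (Real.rpow_nonneg ((hx.trans hy).le) _) (Real.exp_pos _).le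
  rw [lintegral_congr_ae hcong, khAux_lintegral p hp, ENNReal.toReal_ofReal hcpos.le, inv_mul_cancel₀ hcpos.ne']
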